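/- (i) For every integer l ≥ 0, the Cartan double coset satisfies GL₂(𝔬)·a(ϖ^l)·GL₂(𝔬) = 𝒪_L^×·a(ϖ^l)·GL₂(𝔬), and also equals J⁰·a(ϖ^l)·GL₂(𝔬) for J⁰ = 𝒪_L^×·K(𝔭^{m+1}) with any m ∈ ℕ. (ii) For every m ∈ ℕ, GL₂(F) is the disjoint union over l ∈ ℕ of the sets J·a(ϖ^l)·GL₂(𝔬), where J = L^×·K(𝔭^{m+1}). -/

import Mathlib

/-! `F` a nonarchimedean local field, modelled by a field `F` with valuation ring `o`
(a DVR) and uniformizer `ϖ ∈ o`; `a(y) = diag(y,1)`;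
`K(𝔭^m) = {k ∈ GL₂(𝔬) : k ≡ 1 mod 𝔭^m}`.  We fix `𝐚₀ ∈ 𝔬^×`, `𝐚₁ ∈ 𝔬` with
`X² − 𝐚₁X − 𝐚₀` irreducible modulo `𝔭` and set `α = [[0,1],[𝐚₀,𝐚₁]]`, so that
`L = F[α] ⊆ M₂(F)` is an unramified quadratic field extension with ring of integers
`𝒪_L = 𝔬[α]`, unit group `𝒪_L^× ⊆ GL₂(𝔬)`, and `L^× ⊆ GL₂(F)`;
`J⁰ = 𝒪_L^×·K(𝔭^{m+1})` and `J = L^×·K(𝔭^{m+1})`. -/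

/-- `a(y) = diag(y, 1)`. -/
def aM {F : Type*} [Field F] (y : F) : Matrix (Fin 2) (Fin 2) F := !![y, 0; 0, 1]

/-- `GL₂(𝔬)`: matrices with entries in `𝔬` whose inverse also has entries in `𝔬`. -/
def GLo {F : Type*} [Field F] (o : ValuationSubring F) :
    Set (Matrix (Fin 2) (Fin 2) F) :=
  {g | (∀ i j, g i j ∈ o) ∧
    ∃ h : Matrix (Fin 2) (Fin 2) F, (∀ i j, h i j ∈ o) ∧ g * h = 1 ∧ h * g = 1}

/-- The principal congruence subgroup `K(𝔭^m) = {k ∈ GL₂(𝔬) : k ≡ 1 mod 𝔭^m}`. -/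
def Kpm {F : Type*} [Field F] (o : ValuationSubring F) (ϖ : F) (m : ℕ) :
    Set (Matrix (Fin 2) (Fin 2) F) :=
  {g | g ∈ GLo o ∧ ∀ i j, ∃ d ∈ o,
    g i j - (1 : Matrix (Fin 2) (Fin 2) F) i j = ϖ ^ m * d}

/-- The subalgebra `L = F[α] = F + Fα ⊆ M₂(F)` (a quadratic field extension). -/
def Lset {F : Type*} [Field F] (α : Matrix (Fin 2) (Fin 2) F) :
    Set (Matrix (Fin 2) (Fin 2) F) :=
  {m | ∃ x y : F, m = x • (1 : Matrix (Fin 2) (Fin 2) F) + y • α}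

/-- The group `L^×` of invertible elements of `L` (inside `GL₂(F)`). -/
def Lx {F : Type*} [Field F] (α : Matrix (Fin 2) (Fin 2) F) :
    Set (Matrix (Fin 2) (Fin 2) F) :=
  {m | m ∈ Lset α ∧ ∃ m' ∈ Lset α, m * m' = 1 ∧ m' * m = 1}

/-- The order `𝒪_L = 𝔬[α] = 𝔬 + 𝔬α ⊆ M₂(F)`. -/
def OL {F : Type*} [Field F] (o : ValuationSubring F) (α : Matrix (Fin 2) (Fin 2) F) :
    Set (Matrix (Fin 2) (Fin 2) F) :=
  {m | ∃ x y : F, x ∈ o ∧ y ∈ o ∧ m = x • (1 : Matrix (Fin 2) (Fin 2) F) + y • α}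

/-- The unit group `𝒪_L^×` (as a subset of `M₂(F)`). -/
def OLx {F : Type*} [Field F] (o : ValuationSubring F) (α : Matrix (Fin 2) (Fin 2) F) :
    Set (Matrix (Fin 2) (Fin 2) F) :=
  {m | m ∈ OL o α ∧ ∃ m' ∈ OL o α, m * m' = 1 ∧ m' * m = 1}


/-! Since `L/F` is unramified, the norm form `x² + a₁xy − a₀y²` of `x + yα` takes unit values on
primitive vectors `(x, y)`; hence every primitive vector is, up to a scalar, the second column of
a unit of `𝒪_L`, and `GL₂(𝔬) = 𝒪_L^× B(𝔬)` with `B` the lower triangular matrices. Lower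
triangular matrices can be moved across `a(p)`, which gives (i). For (ii), every `g ∈ GL₂(F)` is a
scalar times an element of some `GL₂(𝔬) a(ϖ^l) GL₂(𝔬)`, and scalars lie in `L^×`. Conversely
every element of `L^×` is a scalar times a unit of `𝒪_L`, so two decompositions of `g` differ by a
scalar, which must be a unit because `a(p)₁₁ = 1`; then `l` is read off from `v(det g)`. -/

open DoubleCoset Pointwise

lemma mem_doubleCoset_mul_iff {α : Type*} [Semigroup α] {s k t : Set α} {a b : α} :
    b ∈ doubleCoset a (s * k) t ↔ ∃ x ∈ s, ∃ y ∈ k, ∃ z ∈ t, b = x * y * a * z := by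
  simp only [mem_doubleCoset, Set.mem_mul]
  constructor
  · rintro ⟨_, ⟨x, hx, y, hy, rfl⟩, z, hz, rfl⟩
    exact ⟨x, hx, y, hy, z, hz, rfl⟩
  · rintro ⟨x, hx, y, hy, z, hz, rfl⟩
    exact ⟨_, ⟨x, hx, y, hy, rfl⟩, z, hz, rfl⟩

section ValuationSubring

variable {F : Type*} [Field F] {o : ValuationSubring F}

lemma valuation_eq_one_of_mul_eq_one {x y : F} (hx : x ∈ o) (hy : y ∈ o) (h : x * y = 1) :
    o.valuation x = 1 := by
  refine le_antisymm ((o.valuation_le_one_iff x).mpr hx) ?_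
  calc 1 = o.valuation x * o.valuation y := by rw [← map_mul, h, map_one]
    _ ≤ o.valuation x := mul_le_of_le_one_right' ((o.valuation_le_one_iff y).mpr hy)

lemma mem_of_valuation_eq_one {x : F} (h : o.valuation x = 1) : x ∈ o :=
  (o.valuation_le_one_iff x).mp h.le

lemma inv_mem_of_valuation_eq_one {x : F} (h : o.valuation x = 1) : x⁻¹ ∈ o := by
  rw [← o.valuation_le_one_iff, map_inv₀, h, inv_one]

lemma ne_zero_of_valuation_eq_one {x : F} (h : o.valuation x = 1) : x ≠ 0 := by
  rintro rfl
  simp at h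

lemma exists_forall_div_mem {ι : Type*} [Finite ι] {f : ι → F} (hf : f ≠ 0) :
    ∃ i, f i ≠ 0 ∧ ∀ j, f j / f i ∈ o := by
  obtain ⟨i₀, hi₀⟩ := Function.ne_iff.mp hf
  have : Nonempty ι := ⟨i₀⟩
  obtain ⟨i, hi⟩ := Finite.exists_max fun j => o.valuation (f j)
  have hfi : f i ≠ 0 := by
    rintro h
    have := hi i₀
    rw [h, map_zero, le_zero_iff, map_eq_zero] at this
    exact hi₀ this
  refine ⟨i, hfi, fun j => ?_⟩
  rw [← o.valuation_le_one_iff, map_div₀]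
  exact (div_le_one₀ (zero_lt_iff.mpr ((map_ne_zero _).mpr hfi))).mpr (hi j)

variable {n : Type*} [Fintype n]

lemma mul_apply_mem {l m : Type*} {A : Matrix l n F} {B : Matrix n m F}
    (hA : ∀ i j, A i j ∈ o) (hB : ∀ i j, B i j ∈ o) (i : l) (j : m) : (A * B) i j ∈ o :=
  o.sum_mem fun k _ => mul_mem (hA i k) (hB k j)

lemma det_mem [DecidableEq n] {A : Matrix n n F} (hA : ∀ i j, A i j ∈ o) : A.det ∈ o := by
  rw [Matrix.det_apply]
  exact o.sum_mem fun σ _ => by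
    rw [Units.smul_def]
    exact zsmul_mem (o.prod_mem fun i _ => hA _ _) _

lemma adjugate_apply_mem [DecidableEq n] {A : Matrix n n F} (hA : ∀ i j, A i j ∈ o) (i j : n) :
    A.adjugate i j ∈ o := by
  rw [Matrix.adjugate_apply]
  refine det_mem fun k l => ?_
  rw [Matrix.updateRow_apply]
  split_ifs
  · rw [Pi.single_apply]
    split_ifs
    exacts [o.one_mem, o.zero_mem]
  · exact hA k l

end ValuationSubring

section GLo

variable {F : Type*} [Field F] {o : ValuationSubring F}

lemma mem_GLo_iff {g : Matrix (Fin 2) (Fin 2) F} :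
    g ∈ GLo o ↔ (∀ i j, g i j ∈ o) ∧ o.valuation g.det = 1 := by
  constructor
  · rintro ⟨hg, h, hh, hgh, -⟩
    refine ⟨hg, valuation_eq_one_of_mul_eq_one (det_mem hg) (det_mem hh) ?_⟩
    rw [← Matrix.det_mul, hgh, Matrix.det_one]
  · rintro ⟨hg, hdet⟩
    have hd0 := ne_zero_of_valuation_eq_one hdet
    refine ⟨hg, g.det⁻¹ • g.adjugate,
      fun i j => mul_mem (inv_mem_of_valuation_eq_one hdet) (adjugate_apply_mem hg i j), ?_, ?_⟩
    · rw [Matrix.mul_smul, Matrix.mul_adjugate, smul_smul, inv_mul_cancel₀ hd0, one_smul]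
    · rw [Matrix.smul_mul, Matrix.adjugate_mul, smul_smul, inv_mul_cancel₀ hd0, one_smul]

lemma one_mem_GLo : (1 : Matrix (Fin 2) (Fin 2) F) ∈ GLo o :=
  ⟨fun i j => by rw [Matrix.one_apply]; split_ifs; exacts [o.one_mem, o.zero_mem],
    1, fun i j => by rw [Matrix.one_apply]; split_ifs; exacts [o.one_mem, o.zero_mem],
    one_mul 1, one_mul 1⟩

lemma mul_mem_GLo {A B : Matrix (Fin 2) (Fin 2) F} (hA : A ∈ GLo o) (hB : B ∈ GLo o) :
    A * B ∈ GLo o := by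
  rw [mem_GLo_iff] at *
  exact ⟨mul_apply_mem hA.1 hB.1, by rw [Matrix.det_mul, map_mul, hA.2, hB.2, one_mul]⟩

lemma one_mem_Kpm (ϖ : F) (m : ℕ) : (1 : Matrix (Fin 2) (Fin 2) F) ∈ Kpm o ϖ m :=
  ⟨one_mem_GLo, fun _ _ => ⟨0, o.zero_mem, by rw [sub_self, mul_zero]⟩⟩

end GLo

section Uniformizer

variable {F : Type*} [Field F] {o : ValuationSubring F} {ϖ : F}

lemma valuation_uniformizer_lt_one (hϖo : ϖ ∈ o) (hϖ : Irreducible (⟨ϖ, hϖo⟩ : o)) :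
    o.valuation ϖ < 1 :=
  (o.valuation_lt_one_iff ⟨ϖ, hϖo⟩).mp hϖ.not_isUnit

lemma eq_of_valuation_pow_eq_pow (hϖo : ϖ ∈ o) (hϖ : Irreducible (⟨ϖ, hϖo⟩ : o))
    {l l' : ℕ} (h : o.valuation ϖ ^ l = o.valuation ϖ ^ l') : l = l' := by
  have hϖ0 : ϖ ≠ 0 := fun h0 => hϖ.ne_zero (Subtype.ext h0)
  exact pow_right_injective₀ (zero_lt_iff.mpr ((map_ne_zero _).mpr hϖ0))
    (valuation_uniformizer_lt_one hϖo hϖ).ne h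

variable [IsDiscreteValuationRing o]

lemma valuation_eq_one_of_not_dvd (hϖo : ϖ ∈ o) (hϖ : Irreducible (⟨ϖ, hϖo⟩ : o)) {z : F}
    (hz : z ∈ o) (h : ¬ ∃ d ∈ o, z = ϖ * d) : o.valuation z = 1 := by
  refine ((o.valuation_le_one_iff z).mpr hz).eq_or_lt.resolve_right fun hlt => h ?_
  have hmax := (o.valuation_lt_one_iff ⟨z, hz⟩).mpr hlt
  rw [hϖ.maximalIdeal_eq, Ideal.mem_span_singleton'] at hmax
  obtain ⟨d, hd⟩ := hmax
  exact ⟨d, d.2, by rw [mul_comm]; exact (congrArg Subtype.val hd).symm⟩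

lemma exists_eq_pow_mul (hϖo : ϖ ∈ o) (hϖ : Irreducible (⟨ϖ, hϖo⟩ : o)) {z : F}
    (hz : z ∈ o) (hz0 : z ≠ 0) : ∃ (l : ℕ) (w : F), o.valuation w = 1 ∧ z = ϖ ^ l * w := by
  obtain ⟨l, w, hw⟩ := IsDiscreteValuationRing.eq_unit_mul_pow_irreducible
    (x := ⟨z, hz⟩) (fun h => hz0 (congrArg Subtype.val h)) hϖ
  refine ⟨l, w, o.valuation_unit w, ?_⟩
  rw [mul_comm]
  exact congrArg Subtype.val hw

end Uniformizer

section UnramifiedOrder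

variable {F : Type*} [Field F] {o : ValuationSubring F} {a0 a1 : F}

lemma smul_one_add_smul_eq (a0 a1 x y : F) :
    x • (1 : Matrix (Fin 2) (Fin 2) F) + y • !![0, 1; a0, a1] = !![x, y; a0 * y, x + a1 * y] := by
  ext i j
  fin_cases i <;> fin_cases j <;> simp [mul_comm]

lemma det_smul_one_add_smul (a0 a1 x y : F) :
    (x • (1 : Matrix (Fin 2) (Fin 2) F) + y • !![0, 1; a0, a1]).det =
      x ^ 2 + a1 * x * y - a0 * y ^ 2 := by
  rw [smul_one_add_smul_eq, Matrix.det_fin_two_of]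
  ring

lemma smul_one_add_smul_apply_mem (ha0 : a0 ∈ o) (ha1 : a1 ∈ o) {x y : F} (hx : x ∈ o)
    (hy : y ∈ o) (i j : Fin 2) :
    (x • (1 : Matrix (Fin 2) (Fin 2) F) + y • !![0, 1; a0, a1]) i j ∈ o := by
  rw [smul_one_add_smul_eq]
  fin_cases i <;> fin_cases j
  exacts [hx, hy, mul_mem ha0 hy, add_mem hx (mul_mem ha1 hy)]

/-- `x + yα ↦ (x + a₁y) - yα` is the Galois conjugation of `L/F`, since `α + ᾱ = a₁`. -/
lemma smul_one_add_smul_mul_conj (a0 a1 x y : F) :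
    (x • (1 : Matrix (Fin 2) (Fin 2) F) + y • !![0, 1; a0, a1]) *
        ((x + a1 * y) • 1 + (-y) • !![0, 1; a0, a1]) =
      (x ^ 2 + a1 * x * y - a0 * y ^ 2) • 1 ∧
    ((x + a1 * y) • (1 : Matrix (Fin 2) (Fin 2) F) + (-y) • !![0, 1; a0, a1]) *
        (x • 1 + y • !![0, 1; a0, a1]) =
      (x ^ 2 + a1 * x * y - a0 * y ^ 2) • 1 := by
  simp only [smul_one_add_smul_eq]
  constructor <;>
  · ext i j
    fin_cases i <;> fin_cases j <;> simp [Matrix.mul_apply] <;> ring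

lemma mem_OLx_of_valuation_det (ha1 : a1 ∈ o) {x y : F} (hx : x ∈ o) (hy : y ∈ o)
    (hdet : o.valuation (x • (1 : Matrix (Fin 2) (Fin 2) F) + y • !![0, 1; a0, a1]).det = 1) :
    x • (1 : Matrix (Fin 2) (Fin 2) F) + y • !![0, 1; a0, a1] ∈ OLx o !![0, 1; a0, a1] := by
  rw [det_smul_one_add_smul] at hdet
  set N := x ^ 2 + a1 * x * y - a0 * y ^ 2
  have hN0 := ne_zero_of_valuation_eq_one hdet
  have hNi := inv_mem_of_valuation_eq_one hdet
  obtain ⟨h₁, h₂⟩ := smul_one_add_smul_mul_conj a0 a1 x y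
  refine ⟨⟨x, y, hx, hy, rfl⟩, (N⁻¹ * (x + a1 * y)) • 1 + (N⁻¹ * -y) • !![0, 1; a0, a1],
    ⟨_, _, mul_mem hNi (add_mem hx (mul_mem ha1 hy)), mul_mem hNi (neg_mem hy), rfl⟩, ?_, ?_⟩
  · rw [← smul_smul, ← smul_smul, ← smul_add, Matrix.mul_smul, h₁, smul_smul,
      inv_mul_cancel₀ hN0, one_smul]
  · rw [← smul_smul, ← smul_smul, ← smul_add, Matrix.smul_mul, h₂, smul_smul,
      inv_mul_cancel₀ hN0, one_smul]

lemma mem_GLo_of_mem_OLx (ha0 : a0 ∈ o) (ha1 : a1 ∈ o) {u : Matrix (Fin 2) (Fin 2) F}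
    (hu : u ∈ OLx o !![0, 1; a0, a1]) : u ∈ GLo o := by
  obtain ⟨⟨x, y, hx, hy, rfl⟩, _, ⟨p, q, hp, hq, rfl⟩, h₁, h₂⟩ := hu
  exact ⟨smul_one_add_smul_apply_mem ha0 ha1 hx hy, _, smul_one_add_smul_apply_mem ha0 ha1 hp hq,
    h₁, h₂⟩

lemma smul_mem_Lx {α u : Matrix (Fin 2) (Fin 2) F} {c : F} (hc : c ≠ 0) (hu : u ∈ OLx o α) :
    c • u ∈ Lx α := by
  obtain ⟨⟨x, y, -, -, rfl⟩, _, ⟨p, q, -, -, rfl⟩, h₁, h₂⟩ := hu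
  refine ⟨⟨c * x, c * y, by rw [smul_add, smul_smul, smul_smul]⟩,
    c⁻¹ • (p • 1 + q • α), ⟨c⁻¹ * p, c⁻¹ * q, by rw [smul_add, smul_smul, smul_smul]⟩, ?_, ?_⟩
  · rw [Matrix.smul_mul, Matrix.mul_smul, smul_smul, mul_inv_cancel₀ hc, one_smul, h₁]
  · rw [Matrix.smul_mul, Matrix.mul_smul, smul_smul, inv_mul_cancel₀ hc, one_smul, h₂]

end UnramifiedOrder

section NormForm

variable {F : Type*} [Field F] {o : ValuationSubring F} {a0 a1 : F}

lemma valuation_det_smul_one_add_smul (ha0 : a0 ∈ o) (ha1 : a1 ∈ o)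
    (hf : ∀ z ∈ o, o.valuation (z ^ 2 - a1 * z - a0) = 1) {x y : F} (hx : x ∈ o) (hy : y ∈ o)
    (hxy : o.valuation x = 1 ∨ o.valuation y = 1) :
    o.valuation (x • (1 : Matrix (Fin 2) (Fin 2) F) + y • !![0, 1; a0, a1]).det = 1 := by
  rw [det_smul_one_add_smul]
  rcases eq_or_ne (o.valuation y) 1 with hy1 | hy1
  · have hy0 := ne_zero_of_valuation_eq_one hy1
    have hz : -x / y ∈ o := by
      rw [← o.valuation_le_one_iff, map_div₀, Valuation.map_neg, hy1, div_one]
      exact (o.valuation_le_one_iff x).mpr hx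
    have e : x ^ 2 + a1 * x * y - a0 * y ^ 2 = y ^ 2 * ((-x / y) ^ 2 - a1 * (-x / y) - a0) := by
      field_simp
      ring
    rw [e, map_mul, map_pow, hy1, hf _ hz, one_pow, one_mul]
  · have hx1 := hxy.resolve_right hy1
    have hylt := ((o.valuation_le_one_iff y).mpr hy).lt_of_ne hy1
    have e : x ^ 2 + a1 * x * y - a0 * y ^ 2 = x ^ 2 + y * (a1 * x - a0 * y) := by ring
    have hsmall : o.valuation (y * (a1 * x - a0 * y)) < o.valuation (x ^ 2) := by
      rw [map_mul, map_pow, hx1, one_pow]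
      exact lt_of_le_of_lt (mul_le_of_le_one_right' ((o.valuation_le_one_iff _).mpr
        (sub_mem (mul_mem ha1 hx) (mul_mem ha0 hy)))) hylt
    rw [e, Valuation.map_add_eq_of_lt_left _ hsmall, map_pow, hx1, one_pow]

lemma exists_smul_mem_OLx (ha0 : a0 ∈ o) (ha1 : a1 ∈ o)
    (hf : ∀ z ∈ o, o.valuation (z ^ 2 - a1 * z - a0) = 1) {x y : F} (hxy : ![x, y] ≠ 0) :
    ∃ c : F, c ≠ 0 ∧ ∃ u ∈ OLx o !![0, 1; a0, a1],
      x • (1 : Matrix (Fin 2) (Fin 2) F) + y • !![0, 1; a0, a1] = c • u := by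
  obtain ⟨i, hi, hdiv⟩ := exists_forall_div_mem (o := o) hxy
  have hone : o.valuation (![x, y] i / ![x, y] i) = 1 := by rw [div_self hi, map_one]
  refine ⟨![x, y] i, hi, _, mem_OLx_of_valuation_det ha1 (hdiv 0) (hdiv 1) <|
    valuation_det_smul_one_add_smul ha0 ha1 hf (hdiv 0) (hdiv 1) ?_, ?_⟩
  · fin_cases i
    exacts [Or.inl hone, Or.inr hone]
  · rw [smul_add, smul_smul, smul_smul, mul_div_cancel₀ _ hi, mul_div_cancel₀ _ hi]
    rfl

lemma exists_smul_of_mem_Lx (ha0 : a0 ∈ o) (ha1 : a1 ∈ o)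
    (hf : ∀ z ∈ o, o.valuation (z ^ 2 - a1 * z - a0) = 1) {j : Matrix (Fin 2) (Fin 2) F}
    (hj : j ∈ Lx !![0, 1; a0, a1]) : ∃ c : F, c ≠ 0 ∧ ∃ u ∈ OLx o !![0, 1; a0, a1], j = c • u := by
  obtain ⟨⟨x, y, rfl⟩, j', -, hjj', -⟩ := hj
  refine exists_smul_mem_OLx ha0 ha1 hf fun hxy => ?_
  have hx : x = 0 := congrFun hxy 0
  have hy : y = 0 := congrFun hxy 1
  simp [hx, hy] at hjj'

/-- The second column of `k` is, up to a scalar, the second column of some `u ∈ 𝒪_L^×`. -/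
lemma exists_OLx_mul_of_mem_GLo (ha0 : a0 ∈ o) (ha1 : a1 ∈ o)
    (hf : ∀ z ∈ o, o.valuation (z ^ 2 - a1 * z - a0) = 1) {k : Matrix (Fin 2) (Fin 2) F}
    (hk : k ∈ GLo o) :
    ∃ u ∈ OLx o !![0, 1; a0, a1], ∃ T ∈ GLo o, T 0 1 = 0 ∧ k = u * T := by
  have hcol : ∀ i, ((k 1 1 - a1 * k 0 1) • (1 : Matrix (Fin 2) (Fin 2) F) +
      k 0 1 • !![0, 1; a0, a1]) i 1 = k i 1 := by
    intro i
    rw [smul_one_add_smul_eq]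
    fin_cases i <;> simp
  have hne : ![k 1 1 - a1 * k 0 1, k 0 1] ≠ 0 := fun h => by
    have h01 : k 0 1 = 0 := congrFun h 1
    have h11 : k 1 1 = 0 := by simpa [h01] using congrFun h 0
    have hdet := (mem_GLo_iff.mp hk).2
    rw [Matrix.det_fin_two, h01, h11] at hdet
    simp at hdet
  obtain ⟨c, -, u, hu, hcu⟩ := exists_smul_mem_OLx ha0 ha1 hf hne
  obtain ⟨huOL, u', hu'OL, huu', hu'u⟩ := hu
  refine ⟨u, ⟨huOL, u', hu'OL, huu', hu'u⟩, u' * k,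
    mul_mem_GLo (mem_GLo_of_mem_OLx ha0 ha1 ⟨hu'OL, u, huOL, hu'u, huu'⟩) hk, ?_, ?_⟩
  · have hk1 : ∀ i, k i 1 = c * u i 1 := fun i => by
      rw [← hcol i, hcu, Matrix.smul_apply, smul_eq_mul]
    have h01 : (u' * u) 0 1 = 0 := by rw [hu'u]; rfl
    rw [Matrix.mul_apply, Fin.sum_univ_two, hk1, hk1]
    rw [Matrix.mul_apply, Fin.sum_univ_two] at h01
    linear_combination c * h01
  · rw [← mul_assoc, huu', one_mul]

end NormForm

section Cartan

variable {F : Type*} [Field F] {o : ValuationSubring F}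

lemma exists_mul_aM_eq_aM_mul {p : F} (hp : p ∈ o) {T : Matrix (Fin 2) (Fin 2) F}
    (hT : T ∈ GLo o) (hT01 : T 0 1 = 0) : ∃ T' ∈ GLo o, T * aM p = aM p * T' := by
  obtain ⟨hTe, hTdet⟩ := mem_GLo_iff.mp hT
  refine ⟨!![T 0 0, 0; p * T 1 0, T 1 1], mem_GLo_iff.mpr ⟨?_, ?_⟩, ?_⟩
  · intro i j
    fin_cases i <;> fin_cases j
    exacts [hTe 0 0, o.zero_mem, mul_mem hp (hTe 1 0), hTe 1 1]
  · rwa [Matrix.det_fin_two_of, zero_mul, ← zero_mul (T 1 0), ← hT01, ← Matrix.det_fin_two]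
  · ext i j
    fin_cases i <;> fin_cases j <;> simp [aM, Matrix.mul_apply, hT01, mul_comm]

variable {a0 a1 : F}

theorem doubleCoset_GLo_eq_OLx (ha0 : a0 ∈ o) (ha1 : a1 ∈ o)
    (hf : ∀ z ∈ o, o.valuation (z ^ 2 - a1 * z - a0) = 1) {p : F} (hp : p ∈ o) :
    doubleCoset (aM p) (GLo o) (GLo o) = doubleCoset (aM p) (OLx o !![0, 1; a0, a1]) (GLo o) := by
  ext g
  simp only [mem_doubleCoset]
  constructor
  · rintro ⟨k₁, hk₁, k₂, hk₂, rfl⟩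
    obtain ⟨u, hu, T, hT, hT01, rfl⟩ := exists_OLx_mul_of_mem_GLo ha0 ha1 hf hk₁
    obtain ⟨T', hT', hTT'⟩ := exists_mul_aM_eq_aM_mul hp hT hT01
    refine ⟨u, hu, T' * k₂, mul_mem_GLo hT' hk₂, ?_⟩
    rw [mul_assoc u, hTT', mul_assoc, mul_assoc, mul_assoc]
  · rintro ⟨u, hu, k, hk, rfl⟩
    exact ⟨u, mem_GLo_of_mem_OLx ha0 ha1 hu, k, hk, rfl⟩

theorem doubleCoset_GLo_eq_OLx_mul_Kpm (ha0 : a0 ∈ o) (ha1 : a1 ∈ o)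
    (hf : ∀ z ∈ o, o.valuation (z ^ 2 - a1 * z - a0) = 1) {p : F} (hp : p ∈ o) (ϖ : F) (m : ℕ) :
    doubleCoset (aM p) (GLo o) (GLo o) =
      doubleCoset (aM p) (OLx o !![0, 1; a0, a1] * Kpm o ϖ m) (GLo o) := by
  refine (doubleCoset_GLo_eq_OLx ha0 ha1 hf hp).trans_subset ?_ |>.antisymm ?_
  all_goals refine Set.mul_subset_mul_right (Set.mul_subset_mul_right ?_)
  · exact fun u hu => ⟨u, hu, 1, one_mem_Kpm ϖ m, mul_one u⟩
  · rintro _ ⟨u, hu, x, hx, rfl⟩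
    exact mul_mem_GLo (mem_GLo_of_mem_OLx ha0 ha1 hu) hx.1

end Cartan

section CartanDecomposition

variable {F : Type*} [Field F] {o : ValuationSubring F} {p : F}

lemma mul_mem_doubleCoset_GLo {k M : Matrix (Fin 2) (Fin 2) F} (hk : k ∈ GLo o)
    (hM : M ∈ doubleCoset (aM p) (GLo o) (GLo o)) : k * M ∈ doubleCoset (aM p) (GLo o) (GLo o) := by
  obtain ⟨k₁, hk₁, k₂, hk₂, rfl⟩ := mem_doubleCoset.mp hM
  exact mem_doubleCoset.mpr ⟨k * k₁, mul_mem_GLo hk hk₁, k₂, hk₂, by simp only [mul_assoc]⟩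

lemma mem_doubleCoset_GLo_mul {k M : Matrix (Fin 2) (Fin 2) F} (hk : k ∈ GLo o)
    (hM : M ∈ doubleCoset (aM p) (GLo o) (GLo o)) : M * k ∈ doubleCoset (aM p) (GLo o) (GLo o) := by
  obtain ⟨k₁, hk₁, k₂, hk₂, rfl⟩ := mem_doubleCoset.mp hM
  exact mem_doubleCoset.mpr ⟨k₁, hk₁, k₂ * k, mul_mem_GLo hk₂ hk, by simp only [mul_assoc]⟩

lemma swap_mem_GLo : !![(0 : F), 1; 1, 0] ∈ GLo o := by
  refine mem_GLo_iff.mpr ⟨fun i j => ?_, by simp [Matrix.det_fin_two_of]⟩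
  fin_cases i <;> fin_cases j
  exacts [o.zero_mem, o.one_mem, o.one_mem, o.zero_mem]

lemma swap_mul_swap : !![(0 : F), 1; 1, 0] * !![(0 : F), 1; 1, 0] = 1 := by
  simp [Matrix.one_fin_two]

lemma mem_doubleCoset_of_apply_zero_zero {M : Matrix (Fin 2) (Fin 2) F}
    (hM : ∀ i j, M i j ∈ o) (h00 : M 0 0 = 1) {w : F} (hw : o.valuation w = 1)
    (hdet : M.det = p * w) : M ∈ doubleCoset (aM p) (GLo o) (GLo o) := by
  refine mem_doubleCoset.mpr ⟨!![0, 1; w, M 1 0], mem_GLo_iff.mpr ⟨?_, ?_⟩,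
    !![0, 1; 1, M 0 1], mem_GLo_iff.mpr ⟨?_, ?_⟩, ?_⟩
  · intro i j
    fin_cases i <;> fin_cases j
    exacts [o.zero_mem, o.one_mem, mem_of_valuation_eq_one hw, hM 1 0]
  · simpa [Matrix.det_fin_two_of] using hw
  · intro i j
    fin_cases i <;> fin_cases j
    exacts [o.zero_mem, o.one_mem, o.one_mem, hM 0 1]
  · simp [Matrix.det_fin_two_of]
  · rw [Matrix.det_fin_two, h00, one_mul] at hdet
    ext i j
    fin_cases i <;> fin_cases j <;> simp [aM, Matrix.mul_apply, h00]
    linear_combination hdet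

lemma mem_doubleCoset_of_apply_eq_one {M : Matrix (Fin 2) (Fin 2) F}
    (hM : ∀ i j, M i j ∈ o) {i j : Fin 2} (hij : M i j = 1) {w : F} (hw : o.valuation w = 1)
    (hdet : M.det = p * w) : M ∈ doubleCoset (aM p) (GLo o) (GLo o) := by
  set S : Matrix (Fin 2) (Fin 2) F := !![0, 1; 1, 0]
  have hSG : S ∈ GLo o := swap_mem_GLo
  have hS : ∀ i j, S i j ∈ o := (mem_GLo_iff.mp hSG).1
  have hdetS : S.det = -1 := by simp [S, Matrix.det_fin_two_of]
  have hw' : o.valuation (-w) = 1 := by rwa [Valuation.map_neg]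
  have hSS : S * S = 1 := swap_mul_swap
  fin_cases i <;> fin_cases j
  · exact mem_doubleCoset_of_apply_zero_zero hM hij hw hdet
  · have h := mem_doubleCoset_of_apply_zero_zero (mul_apply_mem hM hS)
      (by simpa [S, Matrix.mul_apply, Fin.sum_univ_two, Matrix.vecMul, dotProduct] using hij) hw'
      (by rw [Matrix.det_mul, hdet, hdetS]; ring)
    have h' := mem_doubleCoset_GLo_mul hSG h
    rwa [mul_assoc, hSS, mul_one] at h'
  · have h := mem_doubleCoset_of_apply_zero_zero (mul_apply_mem hS hM)
      (by simpa [S, Matrix.mul_apply, Fin.sum_univ_two, Matrix.vecMul, dotProduct] using hij) hw'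
      (by rw [Matrix.det_mul, hdet, hdetS]; ring)
    have h' := mul_mem_doubleCoset_GLo hSG h
    rwa [← mul_assoc, hSS, one_mul] at h'
  · have h := mem_doubleCoset_of_apply_zero_zero (mul_apply_mem (mul_apply_mem hS hM) hS)
      (by simpa [S, Matrix.mul_apply, Fin.sum_univ_two, Matrix.vecMul, dotProduct] using hij) hw
      (by rw [Matrix.det_mul, Matrix.det_mul, hdet, hdetS]; ring)
    have h' := mem_doubleCoset_GLo_mul hSG (mul_mem_doubleCoset_GLo hSG h)
    simp only [mul_assoc, hSS, mul_one] at h'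
    rwa [← mul_assoc, hSS, one_mul] at h'

end CartanDecomposition

section CartanUniqueness

variable {F : Type*} [Field F] {o : ValuationSubring F}

lemma apply_mem_of_mem_doubleCoset {p : F} (hp : p ∈ o) {M : Matrix (Fin 2) (Fin 2) F}
    (hM : M ∈ doubleCoset (aM p) (GLo o) (GLo o)) (i j : Fin 2) : M i j ∈ o := by
  obtain ⟨k₁, hk₁, k₂, hk₂, rfl⟩ := mem_doubleCoset.mp hM
  have haM : ∀ i j, aM p i j ∈ o := fun i j => by
    fin_cases i <;> fin_cases j
    exacts [hp, o.zero_mem, o.zero_mem, o.one_mem]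
  exact mul_apply_mem (mul_apply_mem hk₁.1 haM) hk₂.1 i j

lemma valuation_det_of_mem_doubleCoset {p : F} {M : Matrix (Fin 2) (Fin 2) F}
    (hM : M ∈ doubleCoset (aM p) (GLo o) (GLo o)) : o.valuation M.det = o.valuation p := by
  obtain ⟨k₁, hk₁, k₂, hk₂, rfl⟩ := mem_doubleCoset.mp hM
  rw [Matrix.det_mul, Matrix.det_mul, map_mul, map_mul, (mem_GLo_iff.mp hk₁).2,
    (mem_GLo_iff.mp hk₂).2, aM, Matrix.det_fin_two_of]
  simp

/-- The entry `a(p)₁₁ = 1` forbids dividing a matrix of a Cartan double coset by a non-unit. -/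
lemma valuation_eq_one_of_eq_smul {p p' : F} (hp' : p' ∈ o) {M M' : Matrix (Fin 2) (Fin 2) F}
    (hM : M ∈ doubleCoset (aM p) (GLo o) (GLo o))
    (hM' : M' ∈ doubleCoset (aM p') (GLo o) (GLo o))
    {r : F} (hr : r ∈ o) (h : M = r • M') : o.valuation r = 1 := by
  obtain ⟨k₁, ⟨-, h₁, hh₁, -, hh₁k₁⟩, k₂, ⟨-, h₂, hh₂, hk₂h₂, -⟩, rfl⟩ := mem_doubleCoset.mp hM
  have haM : aM p = r • (h₁ * M' * h₂) := by
    calc aM p = h₁ * (k₁ * aM p * k₂) * h₂ := by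
          simp only [← mul_assoc, hh₁k₁, one_mul]
          rw [mul_assoc, hk₂h₂, mul_one]
      _ = r • (h₁ * M' * h₂) := by rw [h, Matrix.mul_smul, Matrix.smul_mul]
  refine valuation_eq_one_of_mul_eq_one hr
    (mul_apply_mem (mul_apply_mem hh₁ (apply_mem_of_mem_doubleCoset hp' hM')) hh₂ 1 1) ?_
  have := congrFun (congrFun haM 1) 1
  simpa [aM] using this.symm

lemma eq_of_smul_eq_smul {ϖ : F} (hϖo : ϖ ∈ o) (hϖ : Irreducible (⟨ϖ, hϖo⟩ : o)) {c c' : F}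
    (hc : c ≠ 0) (hc' : c' ≠ 0) {l l' : ℕ} {M M' : Matrix (Fin 2) (Fin 2) F}
    (hM : M ∈ doubleCoset (aM (ϖ ^ l)) (GLo o) (GLo o))
    (hM' : M' ∈ doubleCoset (aM (ϖ ^ l')) (GLo o) (GLo o)) (h : c • M = c' • M') : l = l' := by
  set r := c⁻¹ * c'
  have hr0 : r ≠ 0 := mul_ne_zero (inv_ne_zero hc) hc'
  have hMr : M = r • M' := by rw [← smul_smul, ← h, smul_smul, inv_mul_cancel₀ hc, one_smul]
  have hM'r : M' = r⁻¹ • M := by rw [hMr, smul_smul, inv_mul_cancel₀ hr0, one_smul]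
  have hr : o.valuation r = 1 := by
    rcases o.mem_or_inv_mem r with hr | hr
    · exact valuation_eq_one_of_eq_smul (pow_mem hϖo _) hM hM' hr hMr
    · rw [← inv_eq_one, ← map_inv₀]
      exact valuation_eq_one_of_eq_smul (pow_mem hϖo _) hM' hM hr hM'r
  apply eq_of_valuation_pow_eq_pow hϖo hϖ
  rw [← map_pow, ← map_pow, ← valuation_det_of_mem_doubleCoset hM,
    ← valuation_det_of_mem_doubleCoset hM', hMr, Matrix.det_smul, map_mul, map_pow, hr, one_pow,
    one_mul]

lemma exists_smul_mem_doubleCoset [IsDiscreteValuationRing o] {ϖ : F} (hϖo : ϖ ∈ o)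
    (hϖ : Irreducible (⟨ϖ, hϖo⟩ : o))
    {g : Matrix (Fin 2) (Fin 2) F} (hg : IsUnit g) :
    ∃ c : F, c ≠ 0 ∧ ∃ l : ℕ, ∃ M ∈ doubleCoset (aM (ϖ ^ l)) (GLo o) (GLo o), g = c • M := by
  have hf : (fun q : Fin 2 × Fin 2 => g q.1 q.2) ≠ 0 := fun h =>
    hg.ne_zero (Matrix.ext fun i j => congrFun h (i, j))
  obtain ⟨⟨i, j⟩, hc, hdiv⟩ := exists_forall_div_mem (o := o) hf
  have hM : ∀ a b, ((g i j)⁻¹ • g) a b ∈ o := fun a b => by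
    rw [Matrix.smul_apply, smul_eq_mul, inv_mul_eq_div]
    exact hdiv (a, b)
  have hdet0 : ((g i j)⁻¹ • g).det ≠ 0 := by
    rw [Matrix.det_smul]
    exact mul_ne_zero (pow_ne_zero _ (inv_ne_zero hc))
      ((Matrix.isUnit_iff_isUnit_det g).mp hg).ne_zero
  obtain ⟨l, w, hw, hdet⟩ := exists_eq_pow_mul hϖo hϖ (det_mem hM) hdet0
  refine ⟨g i j, hc, l, _, mem_doubleCoset_of_apply_eq_one hM (inv_mul_cancel₀ hc) hw hdet, ?_⟩
  rw [smul_smul, mul_inv_cancel₀ hc, one_smul]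

end CartanUniqueness

theorem stmt_12_general {F : Type*} [Field F]
    (o : ValuationSubring F) [IsDiscreteValuationRing o]
    (ϖ : F) (hϖo : ϖ ∈ o) (hϖ : Irreducible (⟨ϖ, hϖo⟩ : o))
    (a0 a1 : F) (ha0 : a0 ∈ o) (ha1 : a1 ∈ o)
    (hirr : ∀ z : F, z ∈ o → ¬ ∃ d ∈ o, z ^ 2 - a1 * z - a0 = ϖ * d) :
    (∀ l m : ℕ,
      ({g | ∃ k₁ ∈ GLo o, ∃ k₂ ∈ GLo o, g = k₁ * aM (ϖ ^ l) * k₂} :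
          Set (Matrix (Fin 2) (Fin 2) F)) =
        {g | ∃ u ∈ OLx o !![0, 1; a0, a1], ∃ k ∈ GLo o, g = u * aM (ϖ ^ l) * k} ∧
      ({g | ∃ k₁ ∈ GLo o, ∃ k₂ ∈ GLo o, g = k₁ * aM (ϖ ^ l) * k₂} :
          Set (Matrix (Fin 2) (Fin 2) F)) =
        {g | ∃ u ∈ OLx o !![0, 1; a0, a1], ∃ x ∈ Kpm o ϖ (m + 1), ∃ k ∈ GLo o,
          g = u * x * aM (ϖ ^ l) * k}) ∧
    (∀ m : ℕ, ∀ g : Matrix (Fin 2) (Fin 2) F, IsUnit g →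
      ∃! l : ℕ, ∃ j₁ ∈ Lx !![0, 1; a0, a1], ∃ j₂ ∈ Kpm o ϖ (m + 1), ∃ k ∈ GLo o,
        g = j₁ * j₂ * aM (ϖ ^ l) * k) := by
  have hf : ∀ z ∈ o, o.valuation (z ^ 2 - a1 * z - a0) = 1 := fun z hz =>
    valuation_eq_one_of_not_dvd hϖo hϖ (sub_mem (sub_mem (pow_mem hz 2) (mul_mem ha1 hz)) ha0)
      (hirr z hz)
  have hcell : ∀ l : ℕ, {g | ∃ k₁ ∈ GLo o, ∃ k₂ ∈ GLo o, g = k₁ * aM (ϖ ^ l) * k₂} =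
      doubleCoset (aM (ϖ ^ l)) (GLo o) (GLo o) := fun l => Set.ext fun _ => mem_doubleCoset.symm
  have hOLx := fun l => doubleCoset_GLo_eq_OLx ha0 ha1 hf (pow_mem hϖo l)
  refine ⟨fun l m => ⟨?_, ?_⟩, fun m g hg => ?_⟩
  · rw [hcell, hOLx]
    exact Set.ext fun _ => mem_doubleCoset
  · rw [hcell, doubleCoset_GLo_eq_OLx_mul_Kpm ha0 ha1 hf (pow_mem hϖo l) ϖ (m + 1)]
    exact Set.ext fun _ => mem_doubleCoset_mul_iff
  obtain ⟨c, hc, l, M, hM, rfl⟩ := exists_smul_mem_doubleCoset hϖo hϖ hg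
  refine ⟨l, ?_, ?_⟩
  · obtain ⟨u, hu, k, hk, rfl⟩ := mem_doubleCoset.mp (hOLx l ▸ hM)
    exact ⟨c • u, smul_mem_Lx hc hu, 1, one_mem_Kpm ϖ (m + 1), k, hk, by
      rw [mul_one, smul_mul_assoc, smul_mul_assoc]⟩
  · rintro l' ⟨j₁, hj₁, j₂, hj₂, k, hk, hg'⟩
    obtain ⟨c', hc', u, hu, rfl⟩ := exists_smul_of_mem_Lx ha0 ha1 hf hj₁
    refine eq_of_smul_eq_smul hϖo hϖ hc' hc ?_ hM (M := u * j₂ * aM (ϖ ^ l') * k) ?_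
    · exact mem_doubleCoset.mpr
        ⟨u * j₂, mul_mem_GLo (mem_GLo_of_mem_OLx ha0 ha1 hu) hj₂.1, k, hk, rfl⟩
    · rw [hg']
      simp only [smul_mul_assoc]

/-- (i) For every `l ≥ 0` the Cartan double coset satisfies
`GL₂(𝔬)·a(ϖ^l)·GL₂(𝔬) = 𝒪_L^×·a(ϖ^l)·GL₂(𝔬) = J⁰·a(ϖ^l)·GL₂(𝔬)` with
`J⁰ = 𝒪_L^×·K(𝔭^{m+1})`, for any `m ∈ ℕ`.
(ii) For every `m ∈ ℕ`, `GL₂(F)` is the disjoint union over `l ∈ ℕ` of the sets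
`J·a(ϖ^l)·GL₂(𝔬)` where `J = L^×·K(𝔭^{m+1})`. -/
theorem stmt_12 {F : Type*} [Field F]
    (o : ValuationSubring F) [IsDiscreteValuationRing o]
    (ϖ : F) (hϖo : ϖ ∈ o) (hϖ : Irreducible (⟨ϖ, hϖo⟩ : o))
    (a0 a1 : F) (ha0 : a0 ∈ o) (ha1 : a1 ∈ o) (ha0u : a0⁻¹ ∈ o) (ha0ne : a0 ≠ 0)
    (hirr : ∀ z : F, z ∈ o → ¬ ∃ d ∈ o, z ^ 2 - a1 * z - a0 = ϖ * d) :
    (∀ l m : ℕ,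
      ({g | ∃ k₁ ∈ GLo o, ∃ k₂ ∈ GLo o, g = k₁ * aM (ϖ ^ l) * k₂} :
          Set (Matrix (Fin 2) (Fin 2) F)) =
        {g | ∃ u ∈ OLx o !![0, 1; a0, a1], ∃ k ∈ GLo o, g = u * aM (ϖ ^ l) * k} ∧
      ({g | ∃ k₁ ∈ GLo o, ∃ k₂ ∈ GLo o, g = k₁ * aM (ϖ ^ l) * k₂} :
          Set (Matrix (Fin 2) (Fin 2) F)) =
        {g | ∃ u ∈ OLx o !![0, 1; a0, a1], ∃ x ∈ Kpm o ϖ (m + 1), ∃ k ∈ GLo o,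
          g = u * x * aM (ϖ ^ l) * k}) ∧
    (∀ m : ℕ, ∀ g : Matrix (Fin 2) (Fin 2) F, IsUnit g →
      ∃! l : ℕ, ∃ j₁ ∈ Lx !![0, 1; a0, a1], ∃ j₂ ∈ Kpm o ϖ (m + 1), ∃ k ∈ GLo o,
        g = j₁ * j₂ * aM (ϖ ^ l) * k) :=
  stmt_12_general o ϖ hϖo hϖ a0 a1 ha0 ha1 hirr
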